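/- arXiv:0902.4441 — 2 statements merged into one kernel-verified Lean document; each statement's English description precedes it below -/
import Mathlib

section
/- Let μ be a λ-survivor. Then: (a) if the rightmost square of row i of λ is not contained in μ (equivalently μ_i < λ_i), then the rightmost square of row i−1 of λ is not contained in μ (equivalently μ_{i−1} < λ_{i−1}); and (b) if the bottommost square of column i of μ is not contained in λ (equivalently λ'_i < μ'_i), then the bottommost square of column i−1 of μ is not contained in λ (equivalently λ'_{i−1} < μ'_{i−1}). -/
open scoped BigOperators
open scoped Classical

namespace Paper

/-! ### Partitions

A partition `λ = (λ_1 ≥ λ_2 ≥ ⋯ ≥ λ_n > 0)` is encoded as the weakly decreasing,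
eventually-zero function `f : ℕ → ℕ` with `f k = λ_{k+1}` (0-based indexing of parts,
parts beyond the length being `0`). -/

def IsPartition (f : ℕ → ℕ) : Prop :=
  (∀ ⦃i j : ℕ⦄, i ≤ j → f j ≤ f i) ∧ ∃ N, ∀ k, N ≤ k → f k = 0

/-- `|λ|`, the size of the partition. -/
noncomputable def psize (f : ℕ → ℕ) : ℕ := ∑ᶠ k, f k

/-- `u_i(λ) = #{k ≥ 1 : λ_k ≥ i}`, the number of parts of `λ` that are at least `i`. -/
noncomputable def numParts (f : ℕ → ℕ) (i : ℕ) : ℕ := Nat.card {k | i ≤ f k}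

/-- `l(λ)`, the number of (positive) parts. -/
noncomputable def plength (f : ℕ → ℕ) : ℕ := numParts f 1

/-- The conjugate partition: `λ'_i = #{k : λ_k ≥ i}` (0-based: `conj f i = λ'_{i+1}`). -/
noncomputable def conj (f : ℕ → ℕ) : ℕ → ℕ := fun i => numParts f (i + 1)

/-- `λ^{(i)} = (λ_1 − 1, …, λ_j − 1, i − 1, λ_{j+1}, …, λ_n)` where `j = u_i(λ)` is the
unique index with `λ_j ≥ i > λ_{j+1}` (switch the `i`-th R of the code to U). -/
noncomputable def swR (f : ℕ → ℕ) (i : ℕ) : ℕ → ℕ := fun k =>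
  if k < numParts f i then f k - 1
  else if k = numParts f i then i - 1
  else f (k - 1)

/-- `λ^{(−i)} = (λ_1 + 1, …, λ_{i−1} + 1, λ_{i+1}, λ_{i+2}, …)` (switch the `i`-th U of the
code, from the right, to R). -/
def swU (f : ℕ → ℕ) (i : ℕ) : ℕ → ℕ := fun k =>
  if k + 1 < i then f k + 1 else f (k + 1)

/-! ### Strips, the sets `𝓡_{λ,μ}` and the signed counts `R_{λ,μ}` -/

/-- `λ − ν` is a vertical strip (at most one square per row); includes `ν ⊆ λ`. -/
def VStrip (f g : ℕ → ℕ) : Prop := ∀ k, g k ≤ f k ∧ f k ≤ g k + 1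

/-- `μ − ν` is a horizontal strip (at most one square per column); includes `ν ⊆ μ`. -/
def HStrip (f g : ℕ → ℕ) : Prop := ∀ k, f (k + 1) ≤ g k ∧ g k ≤ f k

/-- `𝓡_{λ,μ}`: partitions `ν` with `λ − ν` a vertical strip and `μ − ν` a horizontal strip. -/
def RSet (l m : ℕ → ℕ) : Set (ℕ → ℕ) :=
  {nu | IsPartition nu ∧ VStrip l nu ∧ HStrip m nu}

/-- `R_{λ,μ} = Σ_{ν ∈ 𝓡_{λ,μ}} (−1)^{|λ|−|ν|}` (zero when the set is empty). -/
noncomputable def Rnum (l m : ℕ → ℕ) : ℤ :=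
  ∑ᶠ nu ∈ RSet l m, (-1 : ℤ) ^ (psize l - psize nu)

/-- The square in row `r`, column `c` (0-based) is a `λ`-ambiguous square of `μ`:
it lies in both diagrams, is rightmost in its row of `λ` and bottommost in its column of `μ`. -/
def Ambiguous (l m : ℕ → ℕ) (r c : ℕ) : Prop :=
  c + 1 = l r ∧ m (r + 1) ≤ c ∧ c + 1 ≤ m r

/-- `μ` is a `λ`-survivor: `𝓡_{λ,μ}` is nonempty and `μ` has no `λ`-ambiguous squares. -/
def Survivor (l m : ℕ → ℕ) : Prop :=
  (RSet l m).Nonempty ∧ ∀ r c, ¬ Ambiguous l m r c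

noncomputable section

/-! ### The algebra of symmetric functions

`Λ_ℚ = ℚ[p_1, p_2, …]` realized as `MvPolynomial ℕ ℚ`, the variable `X k`
representing the power sum `p_{k+1}`. -/

abbrev SymAlg : Type := MvPolynomial ℕ ℚ

/-- The power sum `p_n` (with `p_0 = 1`). -/
def pp (n : ℕ) : SymAlg := if n = 0 then 1 else MvPolynomial.X (n - 1)

/-- `p_λ` for a multiset of parts. -/
def pMul (s : Multiset ℕ) : SymAlg := (s.map pp).prod

/-- `|Aut λ| = ∏_j f_j!` for a multiset with multiplicities `f_j`. -/
def autF (s : Multiset ℕ) : ℕ := (s.dedup.map fun v => (s.count v).factorial).prod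

/-- `z_λ = ∏_j j^{f_j} f_j!`. -/
def zee (s : Multiset ℕ) : ℕ := s.prod * autF s

/-- The complete symmetric function `h_n = Σ_{λ ⊢ n} z_λ^{-1} p_λ`
(equivalently, `Σ_n h_n t^n = exp Σ_{k≥1} p_k t^k / k`). -/
def hh (n : ℕ) : SymAlg :=
  ∑ P : Nat.Partition n, ((zee P.parts : ℚ)⁻¹) • pMul P.parts

/-- The elementary symmetric function `e_n = Σ_{λ ⊢ n} (−1)^{n−l(λ)} z_λ^{-1} p_λ`
(equivalently, `Σ_n e_n t^n = exp Σ_{k≥1} (−1)^{k−1} p_k t^k / k`). -/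
def ee (n : ℕ) : SymAlg :=
  ∑ P : Nat.Partition n,
    (((-1 : ℚ) ^ (n - Multiset.card P.parts)) * (zee P.parts : ℚ)⁻¹) • pMul P.parts

/-- `perp f g = f^⊥ g`: the adjoint of multiplication by `f` with respect to the Hall
inner product, given explicitly by substituting `p_n^⊥ = n ∂/∂p_n` multiplicatively in `f`. -/
def perp (f g : SymAlg) : SymAlg :=
  ∑ m ∈ f.support, ∑ m' ∈ g.support,
    (MvPolynomial.coeff m f * MvPolynomial.coeff m' g *
      m.prod fun k a => ((k + 1 : ℚ)) ^ a * ((m' k).descFactorial a : ℚ)) •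
      (MvPolynomial.monomial (m' - m) (1 : ℚ))

/-- The weight (degree in the `x`'s) of a `p`-monomial: `p_1^{a_1} p_2^{a_2} ⋯ ↦ Σ k a_k`. -/
def wtm (m : ℕ →₀ ℕ) : ℕ := m.sum fun k a => (k + 1) * a

/-- The maximal weight of a monomial of `f`. -/
def wt (f : SymAlg) : ℕ := f.support.sup wtm

/-- The Bernstein operator `B_n = Σ_{m ≥ 0, n+m ≥ 0} (−1)^m h_{n+m} e_m^⊥`
(the sum is finite on each `f`: terms with `m > wt f` act as zero, which justifies
the truncation). -/
def BOp (n : ℤ) (f : SymAlg) : SymAlg :=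
  ∑ m ∈ Finset.range (wt f + 1),
    if 0 ≤ n + (m : ℤ) then
      ((-1 : ℚ) ^ m) • (hh (n + (m : ℤ)).toNat * perp (ee m) f)
    else 0

/-- The adjoint Bernstein operator `B_n^⊥ = Σ_{m ≥ 0, n+m ≥ 0} (−1)^m e_m h_{n+m}^⊥`. -/
def BpOp (n : ℤ) (f : SymAlg) : SymAlg :=
  ∑ m ∈ Finset.range (wt f + (-n).toNat + 1),
    if 0 ≤ n + (m : ℤ) then
      ((-1 : ℚ) ^ m) • (ee m * perp (hh (n + (m : ℤ)).toNat) f)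
    else 0

/-- The involution `ω` of `Λ_ℚ` (with `ω e_n = h_n`); on power sums,
`ω p_n = (−1)^{n−1} p_n`. -/
def omegaMap : SymAlg →ₐ[ℚ] SymAlg :=
  MvPolynomial.aeval fun k => ((-1 : ℚ) ^ k) • MvPolynomial.X k

/-- `h_k` for integer index, vanishing for `k < 0`. -/
def hz (k : ℤ) : SymAlg := if k < 0 then 0 else hh k.toNat

/-- The Schur function `s_λ`, via the Jacobi–Trudi determinant
`s_λ = det(h_{λ_i − i + j})_{1 ≤ i,j ≤ l(λ)}`. -/
def schur (f : ℕ → ℕ) : SymAlg :=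
  Matrix.det (Matrix.of fun i j : Fin (plength f) =>
    hz ((f i : ℤ) - (i : ℤ) + (j : ℤ)))

/-! ### The graded completion of `Λ_ℚ`, as multivariate formal power series in the `p`'s -/

abbrev SymSeries : Type := MvPowerSeries ℕ ℚ

def coeffS (m : ℕ →₀ ℕ) (g : SymSeries) : ℚ := MvPowerSeries.coeff m g

/-- `f^⊥` acting on a formal series, coefficientwise. -/
def perpS (f : SymAlg) (g : SymSeries) : SymSeries := fun m'' =>
  ∑ m ∈ f.support,
    MvPolynomial.coeff m f * coeffS (m'' + m) g *
      m.prod fun k a => ((k + 1 : ℚ)) ^ a * (((m'' + m) k).descFactorial a : ℚ)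

/-- `B_n = Σ_{m ≥ 0, n+m ≥ 0} (−1)^m h_{n+m} e_m^⊥` acting on the completion, defined
coefficientwise (the term `m` contributes to the coefficient of a monomial `m''` only
when `n + m ≤ wtm m''`, which justifies the truncation). -/
def BS (n : ℤ) (g : SymSeries) : SymSeries := fun m'' =>
  ∑ m ∈ Finset.range (wtm m'' + (-n).toNat + 1),
    if 0 ≤ n + (m : ℤ) then
      ((-1 : ℚ) ^ m) *
        coeffS m'' (((hh (n + (m : ℤ)).toNat : SymAlg) : SymSeries) * perpS (ee m) g)
    else 0

/-- `B_n^⊥ = Σ_{m ≥ 0, n+m ≥ 0} (−1)^m e_m h_{n+m}^⊥` acting on the completion. -/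
def BpS (n : ℤ) (g : SymSeries) : SymSeries := fun m'' =>
  ∑ m ∈ Finset.range (wtm m'' + 1),
    if 0 ≤ n + (m : ℤ) then
      ((-1 : ℚ) ^ m) *
        coeffS m'' (((ee m : SymAlg) : SymSeries) * perpS (hh (n + (m : ℤ)).toNat) g)
    else 0

/-- The formal sum `Σ_{λ ∈ 𝒫} a_λ s_λ` (each coefficient is a genuinely finite sum,
since only the finitely many partitions of `wtm m` contribute at a monomial `m`). -/
def schurSeries (a : (ℕ → ℕ) → ℚ) : SymSeries := fun m =>
  ∑ᶠ f : ℕ → ℕ, if IsPartition f then a f * MvPolynomial.coeff m (schur f) else 0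

/-! ### Two independent families of power sums `p`, `p̂`, for the KP bilinear identity.
Here `X (Sum.inl k) = p_{k+1}` and `X (Sum.inr k) = p̂_{k+1}`. -/

abbrev BiSeries : Type := MvPowerSeries (ℕ ⊕ ℕ) ℚ

def coeffB (m : (ℕ ⊕ ℕ) →₀ ℕ) (g : BiSeries) : ℚ := MvPowerSeries.coeff m g

/-- `τ(p)`: a series in the `p`'s viewed inside the two-variable-family algebra. -/
def liftL (g : SymSeries) : BiSeries := fun m =>
  if ∀ v ∈ m.support, Sum.isLeft v = true then
    coeffS (Finsupp.comapDomain Sum.inl m Sum.inl_injective.injOn) g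
  else 0

/-- `τ(p̂)`: a series in the `p̂`'s viewed inside the two-variable-family algebra. -/
def liftR (g : SymSeries) : BiSeries := fun m =>
  if ∀ v ∈ m.support, Sum.isRight v = true then
    coeffS (Finsupp.comapDomain Sum.inr m Sum.inr_injective.injOn) g
  else 0

/-- Formal partial derivative `∂/∂X_v` on the two-family power series algebra. -/
def DV (v : ℕ ⊕ ℕ) (g : BiSeries) : BiSeries := fun m =>
  ((m v : ℚ) + 1) * coeffB (m + Finsupp.single v 1) g

/-- `∂/∂p_i − ∂/∂p̂_i` (for `i ≥ 1`). -/
def dd (i : ℕ) (g : BiSeries) : BiSeries :=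
  DV (Sum.inl (i - 1)) g - DV (Sum.inr (i - 1)) g

/-- Composition of the commuting operators `∂/∂p_i − ∂/∂p̂_i` over a list of indices. -/
def dProd (s : List ℕ) : BiSeries → BiSeries := s.foldr (fun i F => dd i ∘ F) id

/-- The coefficient of `y^n` in `exp(−Σ_{k≥1} y^k (∂/∂p_k − ∂/∂p̂_k))`, namely
`Σ_{λ ⊢ n} (−1)^{l(λ)} (∏_j f_j!)^{-1} ∏_i (∂/∂p_{λ_i} − ∂/∂p̂_{λ_i})`. -/
def DD (n : ℕ) (g : BiSeries) : BiSeries :=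
  ∑ P : Nat.Partition n,
    (((-1 : ℚ) ^ (Multiset.card P.parts)) * ((autF P.parts : ℚ))⁻¹) •
      dProd (P.parts.sort (· ≤ ·)) g

/-- The coefficient of `t^n` in `exp(Σ_{k≥1} (t^k/k)(p_k − p̂_k))`, namely
`Σ_{λ ⊢ n} z_λ^{-1} ∏_i (p_{λ_i} − p̂_{λ_i})`. -/
def GG (n : ℕ) : MvPolynomial (ℕ ⊕ ℕ) ℚ :=
  ∑ P : Nat.Partition n,
    ((zee P.parts : ℚ)⁻¹) •
      (P.parts.map fun i =>
        (MvPolynomial.X (Sum.inl (i - 1)) - MvPolynomial.X (Sum.inr (i - 1)) :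
          MvPolynomial (ℕ ⊕ ℕ) ℚ)).prod

def wtB (m : (ℕ ⊕ ℕ) →₀ ℕ) : ℕ := m.sum fun v a => (Sum.elim (· + 1) (· + 1) v) * a

def wtL (m : (ℕ ⊕ ℕ) →₀ ℕ) : ℕ := m.sum fun v a => (Sum.elim (· + 1) (fun _ => 0) v) * a

def wtR (m : (ℕ ⊕ ℕ) →₀ ℕ) : ℕ := m.sum fun v a => (Sum.elim (fun _ => 0) (· + 1) v) * a

/-- The left-hand side
`[t^{-1}] exp(Σ_{k≥1} (t^k/k)(p_k − p̂_k)) exp(−Σ_{k≥1} t^{-k}(∂/∂p_k − ∂/∂p̂_k)) τ(p) τ(p̂)`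
of the KP bilinear equation, i.e. `Σ_{n≥0} G_n · D_{n+1} (τ(p)τ(p̂))`, defined
coefficientwise (only `n ≤ wtB m` contributes at a monomial `m`, since `G_n` is
homogeneous of weight `n`). -/
def KPLHS (tau : SymSeries) : BiSeries := fun m =>
  ∑ n ∈ Finset.range (wtB m + 1),
    coeffB m (((GG n : MvPolynomial (ℕ ⊕ ℕ) ℚ) : BiSeries) *
      DD (n + 1) (liftL tau * liftR tau))

/-- `τ` is a `τ`-function for the KP hierarchy: it satisfies the KP bilinear equation. -/
def IsTau (tau : SymSeries) : Prop := KPLHS tau = 0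

/-- `[t^{-1}] (B(t) τ(p)) · (B̂^⊥(t^{-1}) τ(p̂)) = Σ_{n ∈ ℤ} (B_n τ)(p) · (B̂^⊥_{n+1} τ)(p̂)`,
defined coefficientwise (at a monomial `m` only `−wtR m − 1 ≤ n ≤ wtL m` contributes,
which justifies the truncation; `n = j − wtR m − 1`). -/
def prodRHS (tau : SymSeries) : BiSeries := fun m =>
  ∑ j ∈ Finset.range (wtL m + wtR m + 2),
    coeffB m (liftL (BS ((j : ℤ) - (wtR m : ℤ) - 1) tau) *
      liftR (BpS ((j : ℤ) - (wtR m : ℤ)) tau))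

/-! ### The Plücker relations -/

/-- The condition on `ℓ` in the classical Plücker relations: `0 ≤ ℓ ≤ m − 1` and
`α_ℓ − 1 ≥ β_{k+1} − k + ℓ + 1 ≥ α_{ℓ+1}` (1-based, conventions `α_0 = ∞`, `α_m = −∞`)
and `β_{k+1} − k + ℓ + 1 ≥ 0`. -/
def PCond (m : ℕ) (α β : ℕ → ℕ) (k ℓ : ℕ) : Prop :=
  ℓ + 1 ≤ m ∧
  (ℓ = 0 ∨ ((β k : ℤ) - (k : ℤ) + ℓ + 1 ≤ (α (ℓ - 1) : ℤ) - 1)) ∧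
  (ℓ + 1 = m ∨ ((α ℓ : ℤ) ≤ (β k : ℤ) - (k : ℤ) + ℓ + 1)) ∧
  0 ≤ (β k : ℤ) - (k : ℤ) + ℓ + 1

/-- The term indexed by `k` in a classical Plücker relation:
`(−1)^{k−m+1+ℓ} a_{(α_1−1,…,α_ℓ−1, β_{k+1}−k+ℓ+1, α_{ℓ+1},…,α_{m−1})}
 · a_{(β_1+1,…,β_k+1, β_{k+2},…,β_{m+1})}`
for the unique admissible `ℓ` (identically `0` when no `ℓ` exists). -/
def cterm (a : (ℕ → ℕ) → ℚ) (m : ℕ) (α β : ℕ → ℕ) (k : ℕ) : ℚ :=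
  if h : ∃ ℓ : ℕ, PCond m α β k ℓ then
    ((-1 : ℚ) ^ ((k : ℤ) - (m : ℤ) + 1 + (h.choose : ℤ))) *
      a (fun t => if t < h.choose then α t - 1
          else if t = h.choose then ((β k : ℤ) - (k : ℤ) + h.choose + 1).toNat
          else α (t - 1)) *
      a (fun t => if t < k then β t + 1 else β (t + 1))
  else 0

/-- The classical Plücker relations for a family of scalars indexed by partitions. -/
def ClassicalPlucker (a : (ℕ → ℕ) → ℚ) : Prop :=
  ∀ m : ℕ, 1 ≤ m → ∀ α β : ℕ → ℕ, IsPartition α → IsPartition β →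
    plength α ≤ m - 1 → plength β ≤ m + 1 →
      ∑ k ∈ Finset.range (m + 1), cterm a m α β k = 0

/-- The symmetrical form of the Plücker relations:
for all partitions `α`, `β`,
`Σ_{i,j ≥ 1, |α^{(i)}|+|β^{(−j)}| = |α|+|β|+1} (−1)^{|α|−|α^{(i)}|+i+j} a_{α^{(i)}} a_{β^{(−j)}} = 0`. -/
def SymPlucker (a : (ℕ → ℕ) → ℚ) : Prop :=
  ∀ α β : ℕ → ℕ, IsPartition α → IsPartition β →
    (∑ᶠ (i : ℕ), ∑ᶠ (j : ℕ),
      if 1 ≤ i ∧ 1 ≤ j ∧ psize (swR α i) + psize (swU β j) = psize α + psize β + 1 then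
        ((-1 : ℚ) ^ ((psize α : ℤ) - (psize (swR α i) : ℤ) + (i : ℤ) + (j : ℤ))) *
          a (swR α i) * a (swU β j)
      else 0) = 0

end
end Paper

/-! Both implications are proved contrapositively, by exhibiting a `λ`-ambiguous square. If
`μ_i < λ_i` but `λ_{i−1} ≤ μ_{i−1}`, the last square of row `i−1` of `λ` lies in `μ` and has no
square of `μ` below it, since `μ_i < λ_i ≤ λ_{i−1}`. Dually, if `λ'_i < μ'_i` but
`μ'_{i−1} ≤ λ'_{i−1}`, the last square of column `i−1` of `μ` lies in `λ` and is the last square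
of its row of `λ`, since that row lies strictly below column `i` of `λ`. -/

namespace Paper

theorem IsPartition.finite_setOf_lt {f : ℕ → ℕ} (hf : IsPartition f) (c : ℕ) :
    {k | c < f k}.Finite := by
  obtain ⟨N, hN⟩ := hf.2
  refine (Set.finite_Iio N).subset fun k (hk : c < f k) => Set.mem_Iio.2 ?_
  by_contra! hNk
  have := hN k hNk
  omega

theorem IsPartition.conj_antitone {f : ℕ → ℕ} (hf : IsPartition f) : Antitone (conj f) :=
  fun c c' hcc' => Nat.card_mono (hf.finite_setOf_lt c)
    fun k (hk : c' + 1 ≤ f k) => show c + 1 ≤ f k by omega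

theorem IsPartition.lt_conj_iff {f : ℕ → ℕ} (hf : IsPartition f) {r c : ℕ} :
    r < conj f c ↔ c < f r := by
  have hcard : conj f c = {k | c < f k}.ncard := Nat.card_coe_set_eq _
  rw [hcard]
  constructor
  · intro h
    by_contra! hr
    have hsub : {k | c < f k} ⊆ Set.Iio r := fun k (hk : c < f k) =>
      lt_of_not_ge fun hrk => absurd (hk.trans_le (hf.1 hrk)) (not_lt.2 hr)
    have := Set.ncard_le_ncard hsub (Set.finite_Iio r)
    rw [Set.ncard_Iio_nat] at this
    omega
  · intro h
    have hsub : Set.Iic r ⊆ {k | c < f k} := fun k hk => h.trans_le (hf.1 hk)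
    have := Set.ncard_le_ncard hsub (hf.finite_setOf_lt c)
    rw [Set.ncard_Iic_nat] at this
    omega

theorem IsPartition.ambiguous_of_rows {l m : ℕ → ℕ} (hl : IsPartition l) {k : ℕ}
    (hlt : m (k + 1) < l (k + 1)) (hle : l k ≤ m k) : Ambiguous l m k (l k - 1) := by
  have := hl.1 (Nat.le_add_right k 1)
  unfold Ambiguous
  omega

theorem IsPartition.ambiguous_of_cols {l m : ℕ → ℕ} (hl : IsPartition l) (hm : IsPartition m)
    {k : ℕ} (hlt : conj l (k + 1) < conj m (k + 1)) (hle : conj m k ≤ conj l k) :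
    Ambiguous l m (conj m k - 1) k := by
  have hmono := hm.conj_antitone (Nat.le_add_right k 1)
  have hin_m : k < m (conj m k - 1) := hm.lt_conj_iff.1 (by omega)
  have hbelow_m : ¬ k < m (conj m k - 1 + 1) := fun h => absurd (hm.lt_conj_iff.2 h) (by omega)
  have hin_l : k < l (conj m k - 1) := hl.lt_conj_iff.1 (by omega)
  have hlast_l : ¬ k + 1 < l (conj m k - 1) := fun h => absurd (hl.lt_conj_iff.2 h) (by omega)
  unfold Ambiguous
  omega

end Paper

/-- In a `λ`-survivor `μ`:
(a) if `μ_i < λ_i` then `μ_{i−1} < λ_{i−1}` (rows, 1-based `i ≥ 2`; here 0-based);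
(b) if `λ'_i < μ'_i` then `λ'_{i−1} < μ'_{i−1}` (columns). -/
theorem Paper.survivor_props (l m : ℕ → ℕ)
    (hl : Paper.IsPartition l) (hm : Paper.IsPartition m)
    (hs : Paper.Survivor l m) :
    (∀ k : ℕ, m (k + 1) < l (k + 1) → m k < l k) ∧
    (∀ k : ℕ, Paper.conj l (k + 1) < Paper.conj m (k + 1) →
      Paper.conj l k < Paper.conj m k) := by
  refine ⟨fun k hlt => ?_, fun k hlt => ?_⟩
  · by_contra! hle
    exact hs.2 _ _ (hl.ambiguous_of_rows hlt hle)
  · by_contra! hle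
    exact hs.2 _ _ (hl.ambiguous_of_cols hm hlt hle)
end

section
/- For all partitions λ and μ: if μ = λ^{(i)} for some i ≥ 1 then R_{λ,μ} = (−1)^{u_i(λ)}, and if μ is not of the form λ^{(i)} for any i ≥ 1 then R_{λ,μ} = 0. In particular, the λ-survivors are exactly the partitions λ^{(i)} for i ≥ 1, and for each λ-survivor μ the set R_{λ,μ} contains exactly one partition ν. -/
open scoped BigOperators
open scoped Classical

/-! If `(r, c)` is a `λ`-ambiguous square of `μ`, every `ν ∈ 𝓡_{λ,μ}` has `ν_r ∈ {λ_r − 1, λ_r}`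
and both values are admissible, so toggling `ν_r` is a sign-reversing involution and
`R_{λ,μ} = 0`. If `𝓡_{λ,μ} ≠ ∅` and there is no ambiguous square, then `μ_{k+1} = λ_k` whenever
`λ_k ≤ μ_k`, so the rows where `μ` is shorter than `λ` form an initial segment `[0, j)`, on which
`μ_k = λ_k − 1`; this says `μ = λ^{(i)}` with `i = μ_j + 1`. Conversely, for `μ = λ^{(i)}` the strip
conditions force `ν` to be `λ` minus the last square of each of its first `u_i(λ)` rows, of size
`|λ| − u_i(λ)`. -/

namespace Paper

open Function

section Partitions

variable {f : ℕ → ℕ}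

lemma IsPartition.hasFiniteSupport (hf : IsPartition f) : f.HasFiniteSupport := by
  obtain ⟨N, hN⟩ := hf.2
  refine (Set.finite_Iio N).subset fun k hk => ?_
  by_contra hkN
  exact hk (hN k (not_lt.1 hkN))

lemma IsPartition.succ_le (hf : IsPartition f) (k : ℕ) : f (k + 1) ≤ f k := hf.1 k.le_succ

lemma exists_setOf_eq_Iio {P : ℕ → Prop} (hP : ∀ ⦃a b⦄, a ≤ b → P b → P a) {N : ℕ}
    (hN : ¬ P N) : ∃ j, {k | P k} = Set.Iio j :=
  (IsLowerSet.eq_univ_or_Iio (s := {k | P k}) fun _ _ hba ha => hP hba ha).resolve_left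
    fun h => hN (Set.eq_univ_iff_forall.1 h N)

lemma numParts_eq_of_setOf_eq_Iio {i j : ℕ} (h : {k | i ≤ f k} = Set.Iio j) :
    numParts f i = j := by
  simp [numParts, h]

lemma lt_numParts_iff (hf : IsPartition f) {i : ℕ} (hi : 1 ≤ i) (k : ℕ) :
    k < numParts f i ↔ i ≤ f k := by
  obtain ⟨N, hN⟩ := hf.2
  obtain ⟨j, hj⟩ := exists_setOf_eq_Iio (P := fun k => i ≤ f k)
    (fun _ _ hab hb => hb.trans (hf.1 hab)) (N := N) (by simp [hN N le_rfl]; omega)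
  rw [numParts_eq_of_setOf_eq_Iio hj]
  exact (Set.ext_iff.1 hj k).symm

lemma swR_of_lt {i k : ℕ} (hk : k < numParts f i) : swR f i k = f k - 1 := if_pos hk

lemma swR_numParts (i : ℕ) : swR f i (numParts f i) = i - 1 := by
  simp [swR]

lemma swR_succ_of_le {i k : ℕ} (hk : numParts f i ≤ k) : swR f i (k + 1) = f k := by
  simp [swR, show ¬ k + 1 < numParts f i by omega, show k + 1 ≠ numParts f i by omega]

end Partitions

section Size

variable {f g : ℕ → ℕ}

lemma psize_add (hf : f.HasFiniteSupport) (hg : g.HasFiniteSupport) :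
    psize (f + g) = psize f + psize g :=
  finsum_add_distrib hf hg

lemma psize_le_psize (hg : g.HasFiniteSupport) (h : f ≤ g) : psize f ≤ psize g :=
  finsum_le_finsum' (hg.subset fun k hk => by have := h k; simp_all; omega) hg h

lemma psize_update (hf : f.HasFiniteSupport) (r a : ℕ) :
    psize (update f r a) + f r = psize f + a := by
  classical
  set s := insert r hf.toFinset
  have hr : r ∈ s := Finset.mem_insert_self _ _
  have hs : f.support ⊆ s := fun k hk => Finset.mem_insert_of_mem (hf.mem_toFinset.2 hk)
  have hs' : (update f r a).support ⊆ s := by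
    intro k hk
    by_cases hkr : k = r
    · exact hkr ▸ hr
    · rw [mem_support, update_of_ne hkr] at hk
      exact hs hk
  rw [psize, psize, finsum_eq_sum_of_support_subset _ hs', finsum_eq_sum_of_support_subset _ hs,
    Finset.sum_update_of_mem hr, Finset.sum_eq_add_sum_sdiff_singleton_of_mem hr f]
  ring

lemma psize_ite_lt (j : ℕ) : psize (fun k => if k < j then 1 else 0) = j := by
  rw [psize, finsum_eq_sum_of_support_subset (s := Finset.range j)]
  · simp [Finset.filter_true_of_mem]
  · intro k hk
    simpa using hk

end Size

section Strips

variable {l m : ℕ → ℕ}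

lemma mem_RSet_iff (hl : IsPartition l) (nu : ℕ → ℕ) :
    nu ∈ RSet l m ↔
      ∀ k, (nu k ≤ l k ∧ l k ≤ nu k + 1) ∧ (m (k + 1) ≤ nu k ∧ nu k ≤ m k) := by
  refine ⟨fun ⟨_, hv, hh⟩ k => ⟨hv k, hh k⟩, fun h => ⟨⟨?_, ?_⟩, fun k => (h k).1, fun k => (h k).2⟩⟩
  · exact antitone_nat_of_succ_le fun k => (h (k + 1)).2.2.trans (h k).2.1
  · obtain ⟨N, hN⟩ := hl.2
    exact ⟨N, fun k hk => Nat.eq_zero_of_le_zero (hN k hk ▸ (h k).1.1)⟩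

lemma RSet_finite (hl : IsPartition l) : (RSet l m).Finite := by
  obtain ⟨N, hN⟩ := hl.2
  have hle : ∀ nu ∈ RSet l m, ∀ k, nu k ≤ l k := fun nu hnu k => (hnu.2.1 k).1
  refine Set.Finite.of_finite_image (f := fun nu (k : Fin N) => nu k) ?_ ?_
  · refine (Set.Finite.pi' fun k : Fin N => Set.finite_Iic (l k)).subset ?_
    rintro _ ⟨nu, hnu, rfl⟩ k
    exact hle nu hnu k
  · intro nu hnu nu' hnu' h
    funext k
    by_cases hk : k < N
    · exact congrFun h ⟨k, hk⟩
    · have := hN k (not_lt.1 hk)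
      have := hle nu hnu k
      have := hle nu' hnu' k
      omega

lemma psize_le_of_mem_RSet (hl : IsPartition l) {nu : ℕ → ℕ} (hnu : nu ∈ RSet l m) :
    psize nu ≤ psize l :=
  psize_le_psize hl.hasFiniteSupport fun k => (hnu.2.1 k).1

lemma neg_one_pow_sub_add_neg_one_pow_sub_succ {a b : ℕ} (h : b < a) :
    (-1 : ℤ) ^ (a - b) + (-1) ^ (a - (b + 1)) = 0 := by
  rw [show a - b = a - (b + 1) + 1 by omega, pow_succ]
  ring

lemma Rnum_eq_zero_of_ambiguous (hl : IsPartition l) {r c : ℕ} (h : Ambiguous l m r c) :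
    Rnum l m = 0 := by
  classical
  obtain ⟨hc, hmr, hcm⟩ := h
  let toggle : (ℕ → ℕ) → ℕ → ℕ := fun nu => update nu r (if nu r = c then l r else c)
  have hr : ∀ nu ∈ RSet l m, nu r = c ∨ nu r = l r := fun nu hnu => by
    have := (mem_RSet_iff hl nu).1 hnu r
    omega
  have toggle_mem : ∀ nu ∈ RSet l m, toggle nu ∈ RSet l m := fun nu hnu => by
    rw [mem_RSet_iff hl] at hnu ⊢
    intro k
    by_cases hk : k = r
    · subst hk
      simp only [toggle, update_self]
      split_ifs <;> omega
    · simpa only [toggle, update_of_ne hk] using hnu k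
  have hlc : l r ≠ c := by omega
  have toggle_toggle : ∀ nu ∈ RSet l m, toggle (toggle nu) = nu := fun nu hnu => by
    have : (if (if nu r = c then l r else c) = c then l r else c) = nu r := by
      rcases hr nu hnu with h | h <;> simp [h, hlc]
    simp only [toggle, update_self, update_idem, this, update_eq_self]
  have psize_toggle : ∀ nu ∈ RSet l m,
      psize (toggle nu) = psize nu + 1 ∨ psize nu = psize (toggle nu) + 1 := fun nu hnu => by
    have hfin := IsPartition.hasFiniteSupport hnu.1
    rcases hr nu hnu with h | h
    · have := psize_update hfin r (l r)
      simp only [toggle, h, ↓reduceIte]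
      omega
    · have := psize_update hfin r c
      simp only [toggle, h, if_neg hlc]
      omega
  rw [Rnum, finsum_mem_eq_finite_toFinset_sum _ (RSet_finite hl)]
  refine Finset.sum_involution (fun nu _ => toggle nu) (fun nu hnu => ?_) (fun nu hnu _ => ?_)
    (fun nu hnu => by simpa using toggle_mem nu (by simpa using hnu))
    (fun nu hnu => toggle_toggle nu (by simpa using hnu))
  · rw [Set.Finite.mem_toFinset] at hnu
    have h₁ := psize_le_of_mem_RSet hl hnu
    have h₂ := psize_le_of_mem_RSet hl (toggle_mem nu hnu)
    rcases psize_toggle nu hnu with h | h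
    · rw [h]; exact neg_one_pow_sub_add_neg_one_pow_sub_succ (by omega)
    · rw [h, add_comm]; exact neg_one_pow_sub_add_neg_one_pow_sub_succ (by omega)
  · intro h
    have := congrFun h r
    rw [Set.Finite.mem_toFinset] at hnu
    simp only [toggle, update_self] at this
    split_ifs at this <;> omega

lemma Rnum_eq_zero_of_not_survivor (hl : IsPartition l) (h : ¬ Survivor l m) : Rnum l m = 0 := by
  rcases (RSet l m).eq_empty_or_nonempty with hempty | hne
  · rw [Rnum, hempty, finsum_mem_empty]
  · obtain ⟨r, c, hrc⟩ : ∃ r c, Ambiguous l m r c := by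
      by_contra hno
      push Not at hno
      exact h ⟨hne, hno⟩
    exact Rnum_eq_zero_of_ambiguous hl hrc

end Strips

section Swap

variable {l : ℕ → ℕ} {i : ℕ}

def shave (l : ℕ → ℕ) (j : ℕ) : ℕ → ℕ := fun k => if k < j then l k - 1 else l k

lemma psize_shave (hl : IsPartition l) {j : ℕ} (hj : ∀ k < j, 1 ≤ l k) :
    psize l = psize (shave l j) + j := by
  have hsplit : l = shave l j + fun k => if k < j then 1 else 0 := by
    funext k
    simp only [shave, Pi.add_apply]
    split_ifs with hk
    · have := hj k hk
      omega
    · rfl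
  have hfin : (shave l j).HasFiniteSupport :=
    hl.hasFiniteSupport.subset fun k hk => by
      simp only [mem_support, shave] at hk ⊢
      split_ifs at hk <;> omega
  conv_lhs => rw [hsplit]
  rw [psize_add hfin ((Set.finite_Iio j).subset fun k hk => by simpa using hk), psize_ite_lt]

lemma eq_shave_of_mem_RSet_swR (hl : IsPartition l) (hi : 1 ≤ i) {nu : ℕ → ℕ}
    (hnu : nu ∈ RSet l (swR l i)) : nu = shave l (numParts l i) := by
  funext k
  have := (mem_RSet_iff hl nu).1 hnu k
  simp only [shave]
  split_ifs with hk
  · have := swR_of_lt hk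
    have := (lt_numParts_iff hl hi k).1 hk
    omega
  · have := swR_succ_of_le (f := l) (i := i) (not_lt.1 hk)
    omega

lemma shave_mem_RSet_swR (hl : IsPartition l) (hi : 1 ≤ i) :
    shave l (numParts l i) ∈ RSet l (swR l i) := by
  rw [mem_RSet_iff hl]
  intro k
  simp only [shave]
  rcases lt_trichotomy k (numParts l i) with hk | rfl | hk
  · have := swR_of_lt hk
    have := (lt_numParts_iff hl hi k).1 hk
    have : swR l i (k + 1) ≤ l k - 1 := by
      rcases lt_or_eq_of_le (show k + 1 ≤ numParts l i by omega) with hk' | hk'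
      · have := swR_of_lt hk'
        have := hl.succ_le k
        omega
      · rw [hk', swR_numParts]
        omega
    simp only [hk, if_true]
    omega
  · have := swR_numParts (f := l) i
    have := swR_succ_of_le (f := l) (i := i) le_rfl
    have := (lt_numParts_iff hl hi _).not.1 (lt_irrefl _)
    simp only [lt_irrefl, if_false]
    omega
  · obtain ⟨k, rfl⟩ : ∃ k', k = k' + 1 := ⟨k - 1, by omega⟩
    have := swR_succ_of_le (f := l) (i := i) (show numParts l i ≤ k by omega)
    have := swR_succ_of_le (f := l) (i := i) (show numParts l i ≤ k + 1 by omega)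
    have := hl.succ_le k
    simp only [show ¬ k + 1 < numParts l i by omega, if_false]
    omega

lemma RSet_swR (hl : IsPartition l) (hi : 1 ≤ i) :
    RSet l (swR l i) = {shave l (numParts l i)} :=
  Set.eq_singleton_iff_unique_mem.2
    ⟨shave_mem_RSet_swR hl hi, fun _ => eq_shave_of_mem_RSet_swR hl hi⟩

lemma not_ambiguous_swR (r c : ℕ) : ¬ Ambiguous l (swR l i) r c := by
  rintro ⟨hc, hr, hcr⟩
  rcases lt_or_ge r (numParts l i) with h | h
  · have := swR_of_lt h
    omega
  · have := swR_succ_of_le h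
    omega

lemma survivor_swR (hl : IsPartition l) (hi : 1 ≤ i) : Survivor l (swR l i) :=
  ⟨by simp [RSet_swR hl hi], not_ambiguous_swR⟩

lemma Rnum_swR (hl : IsPartition l) (hi : 1 ≤ i) :
    Rnum l (swR l i) = (-1) ^ numParts l i := by
  have hsize := psize_shave hl fun k hk => hi.trans ((lt_numParts_iff hl hi k).1 hk)
  rw [Rnum, RSet_swR hl hi, finsum_mem_singleton, hsize, Nat.add_sub_cancel_left]

lemma eq_swR_of {m : ℕ → ℕ} {j : ℕ} (hj : numParts l i = j) (hlt : ∀ k < j, m k = l k - 1)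
    (heq : m j = i - 1) (hgt : ∀ k, j ≤ k → m (k + 1) = l k) : m = swR l i := by
  subst hj
  funext k
  rcases lt_trichotomy k (numParts l i) with hk | rfl | hk
  · rw [swR_of_lt hk, hlt k hk]
  · rw [swR_numParts, heq]
  · obtain ⟨k, rfl⟩ : ∃ k', k = k' + 1 := ⟨k - 1, by omega⟩
    rw [swR_succ_of_le (by omega), hgt k (by omega)]

lemma Survivor.succ_eq_of_le {m : ℕ → ℕ} (hl : IsPartition l) (h : Survivor l m) {k : ℕ}
    (hk : l k ≤ m k) : m (k + 1) = l k := by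
  obtain ⟨⟨nu, hnu⟩, hamb⟩ := h
  have := (mem_RSet_iff hl nu).1 hnu k
  by_contra hne
  exact hamb k (l k - 1) ⟨by omega, by omega, by omega⟩

lemma exists_eq_swR_of_survivor {m : ℕ → ℕ} (hl : IsPartition l) (h : Survivor l m) :
    ∃ i, 1 ≤ i ∧ m = swR l i := by
  obtain ⟨nu, hnu⟩ := h.1
  have hnu := (mem_RSet_iff hl nu).1 hnu
  have m_anti : Antitone m := antitone_nat_of_succ_le fun k => (hnu k).2.1.trans (hnu k).2.2
  have le_of_le : ∀ a b, a ≤ b → l a ≤ m a → l b ≤ m b := fun a b hab ha => by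
    induction b, hab using Nat.le_induction with
    | base => exact ha
    | succ k _ ih => exact (h.succ_eq_of_le hl ih).ge.trans' (hl.succ_le k)
  obtain ⟨N, hN⟩ := hl.2
  obtain ⟨j, hj⟩ := exists_setOf_eq_Iio (P := fun k => m k < l k) (N := N)
    (fun a b hab hb => not_le.1 fun ha => (le_of_le a b hab ha).not_gt hb)
    (by simp [hN N le_rfl])
  have hlt : ∀ k, m k < l k ↔ k < j := fun k => Set.ext_iff.1 hj k
  have hnum : numParts l (m j + 1) = j := by
    refine numParts_eq_of_setOf_eq_Iio (Set.ext fun k => ?_)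
    simp only [Set.mem_ofPred_eq, Set.mem_Iio]
    constructor
    · intro hk
      by_contra hjk
      have := hlt j
      have := hl.1 (not_lt.1 hjk)
      omega
    · intro hk
      have := (hlt k).2 hk
      have := hnu k
      have := m_anti hk.le
      omega
  refine ⟨m j + 1, by omega, eq_swR_of hnum (fun k hk => ?_) (by omega) fun k hk => ?_⟩
  · have := (hlt k).2 hk
    have := hnu k
    omega
  · exact h.succ_eq_of_le hl (not_lt.1 fun h => by have := (hlt k).1 h; omega)

end Swap

end Paper

theorem Paper.Rnum_characterization_general (l m : ℕ → ℕ)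
    (hl : Paper.IsPartition l) :
    (∀ i : ℕ, 1 ≤ i → m = Paper.swR l i →
      Paper.Rnum l m = (-1 : ℤ) ^ (Paper.numParts l i)) ∧
    ((¬ ∃ i : ℕ, 1 ≤ i ∧ m = Paper.swR l i) → Paper.Rnum l m = 0) ∧
    (Paper.Survivor l m ↔ ∃ i : ℕ, 1 ≤ i ∧ m = Paper.swR l i) ∧
    (Paper.Survivor l m → ∃! nu : ℕ → ℕ, nu ∈ Paper.RSet l m) := by
  have survivor_iff : Paper.Survivor l m ↔ ∃ i, 1 ≤ i ∧ m = Paper.swR l i :=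
    ⟨Paper.exists_eq_swR_of_survivor hl, fun ⟨i, hi, hm⟩ => hm ▸ Paper.survivor_swR hl hi⟩
  refine ⟨fun i hi hm => hm ▸ Paper.Rnum_swR hl hi,
    fun h => Paper.Rnum_eq_zero_of_not_survivor hl (survivor_iff.not.2 h), survivor_iff,
    fun h => ?_⟩
  obtain ⟨i, hi, rfl⟩ := survivor_iff.1 h
  rw [Paper.RSet_swR hl hi]
  exact ⟨_, rfl, fun _ => id⟩

/-- If `μ = λ^{(i)}` for some `i ≥ 1` then `R_{λ,μ} = (−1)^{u_i(λ)}`;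
if `μ` is not of this form then `R_{λ,μ} = 0`. In particular the `λ`-survivors are exactly
the `λ^{(i)}`, `i ≥ 1`, and for each `λ`-survivor `μ` the set `𝓡_{λ,μ}` has exactly one
element. -/
theorem Paper.Rnum_characterization (l m : ℕ → ℕ)
    (hl : Paper.IsPartition l) (hm : Paper.IsPartition m) :
    (∀ i : ℕ, 1 ≤ i → m = Paper.swR l i →
      Paper.Rnum l m = (-1 : ℤ) ^ (Paper.numParts l i)) ∧
    ((¬ ∃ i : ℕ, 1 ≤ i ∧ m = Paper.swR l i) → Paper.Rnum l m = 0) ∧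
    (Paper.Survivor l m ↔ ∃ i : ℕ, 1 ≤ i ∧ m = Paper.swR l i) ∧
    (Paper.Survivor l m → ∃! nu : ℕ → ℕ, nu ∈ Paper.RSet l m) :=
  Paper.Rnum_characterization_general l m hl
end
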